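/- arXiv:2306.01946 — 2 statements merged into one kernel-verified Lean document; each statement's English description precedes it below -/
import Mathlib

section
/- Under the assumptions of the SGDAS one-step lemma with constant stepsize τ, E(‖v⁺ − v̂‖²) = ⟨v − v̂, (I − τ AᵀA(2I − τ c AᵀA))(v − v̂)⟩, and consequently E(‖v⁺ − v̂‖²) ≤ λ‖v − v̂‖² with λ = ρ(I_d − τ AᵀA(2I − τ c AᵀA)), where ρ denotes the spectral radius. -/
/-!
With `e = v - v̂` and `u = AᵀA e`, consistency `A v̂ = b` turns the step into
`v⁺ - v̂ = e - τ ⟨u, x⟩ x`, so `‖v⁺ - v̂‖² = ‖e‖² - 2τ ⟨u, x⟩⟨e, x⟩ + τ² ⟨u, x⟩² ‖x‖²`.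
Expanding the products of inner products in coordinates, the moment assumptions
`E(xxᵀ) = I` and `E(xxᵀ‖x‖²) = c I` give the expectation `‖e‖² - 2τ ⟨u, e⟩ + τ² c ‖u‖²`,
which is `⟨e, B e⟩`. Since `B` is symmetric, `λ I - B` is conjugate under the orthogonal matrix of
eigenvectors to the diagonal matrix of the `λ - λᵢ ≥ 0`, hence positive semidefinite; `λ` bounds
every eigenvalue because a matrix has finitely many eigenvalues, so the set of their absolute
values is bounded above.
-/

open MeasureTheory Matrix

namespace Matrix

variable {n : Type*} [Fintype n] [DecidableEq n]

theorem finite_abs_eigenvalues (B : Matrix n n ℝ) :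
    {r : ℝ | ∃ t : ℝ, |t| = r ∧ ∃ w : n → ℝ, w ≠ 0 ∧ B *ᵥ w = t • w}.Finite := by
  refine ((Module.End.finite_hasEigenvalue (toLin' B)).image abs).subset ?_
  rintro r ⟨t, rfl, w, hw, hBw⟩
  exact ⟨t, Module.End.hasEigenvalue_of_hasEigenvector
    ⟨Module.End.mem_eigenspace_iff.mpr (by simpa using hBw), hw⟩, rfl⟩

theorem IsHermitian.eigenvalues_le_sSup_abs {B : Matrix n n ℝ} (hB : B.IsHermitian) (i : n) :
    hB.eigenvalues i ≤ sSup {r : ℝ | ∃ t : ℝ, |t| = r ∧ ∃ w : n → ℝ, w ≠ 0 ∧ B *ᵥ w = t • w} :=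
  (le_abs_self _).trans <| le_csSup B.finite_abs_eigenvalues.bddAbove
    ⟨_, rfl, _, (WithLp.ofLp_eq_zero 2).not.mpr (hB.eigenvectorBasis.orthonormal.ne_zero i),
      hB.mulVec_eigenvectorBasis i⟩

theorem IsHermitian.dotProduct_mulVec_le_of_eigenvalues_le {B : Matrix n n ℝ}
    (hB : B.IsHermitian) {lam : ℝ} (hle : ∀ i, hB.eigenvalues i ≤ lam) (e : n → ℝ) :
    e ⬝ᵥ B *ᵥ e ≤ lam * (e ⬝ᵥ e) := by
  set U : Matrix n n ℝ := (hB.eigenvectorUnitary : Matrix n n ℝ)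
  have hU : U * star U = 1 := Unitary.coe_mul_star_self _
  have hdiag : lam • 1 - B = U * diagonal (fun i => lam - hB.eigenvalues i) * Uᴴ := by
    have hsplit : diagonal (fun i => lam - hB.eigenvalues i)
        = lam • 1 - diagonal (RCLike.ofReal ∘ hB.eigenvalues) := by
      ext i j; by_cases h : i = j <;> simp [h]
    conv_lhs => rw [hB.spectral_theorem]
    rw [Unitary.conjStarAlgAut_apply, hsplit, mul_sub, sub_mul, Matrix.mul_smul, mul_one,
      smul_mul, ← star_eq_conjTranspose, hU]
  have hpsd : (lam • 1 - B).PosSemidef := hdiag ▸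
    (posSemidef_diagonal_iff.mpr fun i => sub_nonneg.mpr (hle i)).mul_mul_conjTranspose_same U
  have hnonneg := hpsd.dotProduct_mulVec_nonneg e
  simp only [star_trivial, sub_mulVec, smul_mulVec, one_mulVec, dotProduct_sub,
    dotProduct_smul, smul_eq_mul] at hnonneg
  linarith

theorem IsSymm.one_sub_smul_mul_sub_smul {M : Matrix n n ℝ} (hM : M.IsSymm) (τ s : ℝ) :
    (1 - τ • (M * ((2 : ℝ) • 1 - s • M))).IsSymm := by
  rw [mul_sub, Matrix.mul_smul, Matrix.mul_smul, mul_one, ← sq]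
  exact isSymm_one.sub (((hM.smul 2).sub ((hM.pow 2).smul s)).smul τ)

theorem IsSymm.dotProduct_one_sub_smul_mul_sub_smul_mulVec {M : Matrix n n ℝ} (hM : M.IsSymm)
    (τ s : ℝ) (e : n → ℝ) :
    e ⬝ᵥ (1 - τ • (M * ((2 : ℝ) • 1 - s • M))) *ᵥ e
      = e ⬝ᵥ e - 2 * τ * (M *ᵥ e ⬝ᵥ e) + τ * s * (M *ᵥ e ⬝ᵥ M *ᵥ e) := by
  have hself : e ⬝ᵥ M *ᵥ (M *ᵥ e) = M *ᵥ e ⬝ᵥ M *ᵥ e := by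
    rw [dotProduct_mulVec, ← mulVec_transpose, hM.eq]
  simp only [sub_mulVec, one_mulVec, smul_mulVec, ← mulVec_mulVec, mulVec_sub, mulVec_smul,
    dotProduct_sub, dotProduct_smul, smul_eq_mul, hself, dotProduct_comm e (M *ᵥ e)]
  ring

end Matrix

section Moments

variable {n Ω : Type*} [Fintype n] [MeasurableSpace Ω] {μ : Measure Ω} {x : Ω → n → ℝ}

theorem dotProduct_mul_dotProduct_mul_eq_sum (u w y : n → ℝ) (a : ℝ) :
    (u ⬝ᵥ y) * (w ⬝ᵥ y) * a = ∑ i, ∑ j, u i * w j * (y i * y j * a) := by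
  rw [dotProduct, dotProduct, Finset.sum_mul_sum, Finset.sum_mul]
  refine Finset.sum_congr rfl fun i _ => ?_
  rw [Finset.sum_mul]
  exact Finset.sum_congr rfl fun j _ => by ring

variable {f : Ω → ℝ}

theorem integrable_dotProduct_mul_dotProduct_mul
    (hint : ∀ i j, Integrable (fun ω => x ω i * x ω j * f ω) μ) (u w : n → ℝ) :
    Integrable (fun ω => (u ⬝ᵥ x ω) * (w ⬝ᵥ x ω) * f ω) μ := by
  simp only [dotProduct_mul_dotProduct_mul_eq_sum]
  exact integrable_finsetSum _ fun i _ => integrable_finsetSum _ fun j _ =>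
    (hint i j).const_mul _

theorem integral_dotProduct_mul_dotProduct_mul [DecidableEq n] {k : ℝ}
    (hint : ∀ i j, Integrable (fun ω => x ω i * x ω j * f ω) μ)
    (hmom : ∀ i j, ∫ ω, x ω i * x ω j * f ω ∂μ = if i = j then k else 0) (u w : n → ℝ) :
    ∫ ω, (u ⬝ᵥ x ω) * (w ⬝ᵥ x ω) * f ω ∂μ = k * (u ⬝ᵥ w) := by
  simp only [dotProduct_mul_dotProduct_mul_eq_sum]
  rw [integral_finsetSum _ fun i _ => integrable_finsetSum _ fun j _ => (hint i j).const_mul _]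
  simp_rw [integral_finsetSum _ fun j _ => (hint _ j).const_mul _, integral_const_mul, hmom]
  simp [dotProduct, Finset.mul_sum, mul_comm]

theorem integral_dotProduct_self_sub_smul [IsProbabilityMeasure μ] [DecidableEq n] {c τ : ℝ}
    (hint2 : ∀ i j, Integrable (fun ω => x ω i * x ω j) μ)
    (hint4 : ∀ i j, Integrable (fun ω => x ω i * x ω j * (x ω ⬝ᵥ x ω)) μ)
    (hiso : ∀ i j, ∫ ω, x ω i * x ω j ∂μ = if i = j then (1 : ℝ) else 0)
    (h4 : ∀ i j, ∫ ω, x ω i * x ω j * (x ω ⬝ᵥ x ω) ∂μ = if i = j then c else 0) (e u : n → ℝ) :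
    ∫ ω, (e - (τ * (u ⬝ᵥ x ω)) • x ω) ⬝ᵥ (e - (τ * (u ⬝ᵥ x ω)) • x ω) ∂μ
      = e ⬝ᵥ e - 2 * τ * (u ⬝ᵥ e) + τ ^ 2 * (c * (u ⬝ᵥ u)) := by
  have hint_one : ∀ i j, Integrable (fun ω => x ω i * x ω j * 1) μ := by simpa using hint2
  have hmom_one : ∀ i j, ∫ ω, x ω i * x ω j * 1 ∂μ = if i = j then (1 : ℝ) else 0 := by
    simpa using hiso
  have hexpand : ∀ ω, (e - (τ * (u ⬝ᵥ x ω)) • x ω) ⬝ᵥ (e - (τ * (u ⬝ᵥ x ω)) • x ω)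
      = e ⬝ᵥ e - 2 * τ * ((u ⬝ᵥ x ω) * (e ⬝ᵥ x ω) * 1)
        + τ ^ 2 * ((u ⬝ᵥ x ω) * (u ⬝ᵥ x ω) * (x ω ⬝ᵥ x ω)) := fun ω => by
    simp only [sub_dotProduct, dotProduct_sub, smul_dotProduct, dotProduct_smul, smul_eq_mul,
      dotProduct_comm (x ω) e]
    ring
  have hcross := (integrable_dotProduct_mul_dotProduct_mul hint_one u e).const_mul (2 * τ)
  have hquartic := (integrable_dotProduct_mul_dotProduct_mul hint4 u u).const_mul (τ ^ 2)
  have hlin : Integrable (fun ω => e ⬝ᵥ e - 2 * τ * ((u ⬝ᵥ x ω) * (e ⬝ᵥ x ω) * 1)) μ :=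
    (integrable_const _).sub hcross
  simp_rw [hexpand]
  rw [integral_add hlin hquartic, integral_sub (integrable_const _) hcross, integral_const_mul,
    integral_const_mul, integral_dotProduct_mul_dotProduct_mul hint_one hmom_one,
    integral_dotProduct_mul_dotProduct_mul hint4 h4]
  simp

end Moments

/-- one step of SGDAS with constant stepsize `τ` for a consistent system
`A v̂ = b`: `E(‖v⁺ − v̂‖²) = ⟨v − v̂, (I − τ AᵀA(2I − τ c AᵀA))(v − v̂)⟩`, and consequently
`E(‖v⁺ − v̂‖²) ≤ λ ‖v − v̂‖²` with `λ` the spectral radius of the symmetric matrix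
`I − τ AᵀA(2I − τ c AᵀA)` (the supremum of the absolute values of its eigenvalues). -/
theorem sgdas_one_step_contraction_spectral_radius
    {d m : ℕ} {Ω : Type*} [MeasurableSpace Ω] (μ : Measure Ω) [IsProbabilityMeasure μ]
    (x : Ω → Fin d → ℝ) (c τ : ℝ)
    (hint2 : ∀ i j, Integrable (fun ω => x ω i * x ω j) μ)
    (hint4 : ∀ i j, Integrable (fun ω => x ω i * x ω j * (x ω ⬝ᵥ x ω)) μ)
    (hiso : ∀ i j, ∫ ω, x ω i * x ω j ∂μ = if i = j then (1 : ℝ) else 0)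
    (h4 : ∀ i j, ∫ ω, x ω i * x ω j * (x ω ⬝ᵥ x ω) ∂μ = if i = j then c else 0)
    (A : Matrix (Fin m) (Fin d) ℝ) (b : Fin m → ℝ) (vhat v : Fin d → ℝ)
    (hcons : A.mulVec vhat = b)
    (B : Matrix (Fin d) (Fin d) ℝ)
    (hB : B = (1 : Matrix (Fin d) (Fin d) ℝ)
        - τ • ((Aᵀ * A) * ((2 : ℝ) • (1 : Matrix (Fin d) (Fin d) ℝ) - (τ * c) • (Aᵀ * A))))
    (lam : ℝ)
    (hlam : lam = sSup {r : ℝ | ∃ t : ℝ, |t| = r ∧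
        ∃ w : Fin d → ℝ, w ≠ 0 ∧ B.mulVec w = t • w}) :
    (∫ ω, (v - τ • (((A.mulVec v - b) ⬝ᵥ A.mulVec (x ω)) • x ω) - vhat) ⬝ᵥ
          (v - τ • (((A.mulVec v - b) ⬝ᵥ A.mulVec (x ω)) • x ω) - vhat) ∂μ
        = (v - vhat) ⬝ᵥ B.mulVec (v - vhat)) ∧
    (∫ ω, (v - τ • (((A.mulVec v - b) ⬝ᵥ A.mulVec (x ω)) • x ω) - vhat) ⬝ᵥ
          (v - τ • (((A.mulVec v - b) ⬝ᵥ A.mulVec (x ω)) • x ω) - vhat) ∂μ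
        ≤ lam * ((v - vhat) ⬝ᵥ (v - vhat))) := by
  subst hcons hlam
  set e := v - vhat
  set u := (Aᵀ * A) *ᵥ e
  have hM : (Aᵀ * A).IsSymm := by simpa using isHermitian_conjTranspose_mul_self A
  have hBsymm : B.IsHermitian :=
    hB ▸ isHermitian_iff_isSymm.mpr (hM.one_sub_smul_mul_sub_smul τ (τ * c))
  have hstep : ∀ ω, v - τ • (((A *ᵥ v - A *ᵥ vhat) ⬝ᵥ A *ᵥ x ω) • x ω) - vhat
      = e - (τ * (u ⬝ᵥ x ω)) • x ω := fun ω => by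
    rw [← mulVec_sub, dotProduct_mulVec, ← mulVec_transpose, mulVec_mulVec, smul_smul,
      sub_right_comm]
  have hquad : e ⬝ᵥ e - 2 * τ * (u ⬝ᵥ e) + τ ^ 2 * (c * (u ⬝ᵥ u)) = e ⬝ᵥ B *ᵥ e := by
    rw [hB, hM.dotProduct_one_sub_smul_mul_sub_smul_mulVec]
    ring
  simp_rw [hstep]
  rw [integral_dotProduct_self_sub_smul hint2 hint4 hiso h4, hquad]
  exact ⟨rfl, hBsymm.dotProduct_mulVec_le_of_eigenvalues_le hBsymm.eigenvalues_le_sSup_abs e⟩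
end

section
/- Let (v^k) be generated by v^{k+1} = v^k − τ⟨Av^k − b, Ax⟩x with v^0 = 0, τ = 1/(c‖A‖²), and x sampled i.i.d. isotropic with E(xxᵀ‖x‖²)=c I_d. Then min_{0 ≤ k ≤ N−1} E(‖Aᵀ(Av^k − b)‖²) ≤ c‖A‖²‖b‖²/N. -/
open MeasureTheory ProbabilityTheory Matrix

/-- The spectral (operator) norm of a matrix. -/
noncomputable def matrixOpNorm {m d : ℕ} (A : Matrix (Fin m) (Fin d) ℝ) : ℝ :=
  ‖LinearMap.toContinuousLinearMap (Matrix.toEuclideanLin A)‖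

/-!
Write `r = A v - b` and `g = Aᵀ r`. One step replaces `r` by `r - τ ⟨g, x⟩ A x`, so
`‖r'‖² ≤ ‖r‖² - 2τ ⟨g, x⟩² + τ² ‖A‖² ⟨g, x⟩² ‖x‖²`. The iterate `v^k` is a measurable function of
`x^0, …, x^(k-1)`, hence independent of `x^k`, and the moment assumptions then give
`E ⟨g, x⟩² = E ‖g‖²` and `E ⟨g, x⟩² ‖x‖² = c E ‖g‖²`. For `τ = 1/(c‖A‖²)` this is
`E ‖r^(k+1)‖² ≤ E ‖r^k‖² - τ E ‖g^k‖²`; telescoping from `‖r^0‖² = ‖b‖²` bounds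
`τ ∑_{k<N} E ‖g^k‖²` by `‖b‖²`, and the smallest term is at most the mean.
-/

open Finset

section DotProduct

variable {ι : Type*} [Fintype ι]

lemma real_dotProduct_self_nonneg (u : ι → ℝ) : 0 ≤ u ⬝ᵥ u := by
  simpa using dotProduct_self_star_nonneg u

lemma abs_mul_apply_le_dotProduct_self (u : ι → ℝ) (i j : ι) : |u i * u j| ≤ u ⬝ᵥ u := by
  have hsq : ∀ k, u k * u k ≤ u ⬝ᵥ u := fun k =>
    single_le_sum (fun l _ => mul_self_nonneg (u l)) (mem_univ k)
  rw [abs_mul]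
  nlinarith [hsq i, hsq j, abs_mul_abs_self (u i), abs_mul_abs_self (u j),
    sq_nonneg (|u i| - |u j|)]

lemma sq_dotProduct_mul_eq_sum (u y : ι → ℝ) (s : ℝ) :
    (u ⬝ᵥ y) ^ 2 * s = ∑ i, ∑ j, (u i * u j) * (y i * y j * s) := by
  rw [sq, dotProduct, sum_mul_sum, sum_mul]
  exact sum_congr rfl fun i _ => by rw [sum_mul]; exact sum_congr rfl fun j _ => by ring

lemma dotProduct_self_sub_smul (r w : ι → ℝ) (t : ℝ) :
    (r - t • w) ⬝ᵥ (r - t • w) = r ⬝ᵥ r - 2 * t * (r ⬝ᵥ w) + t ^ 2 * (w ⬝ᵥ w) := by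
  simp only [sub_dotProduct, dotProduct_sub, smul_dotProduct, dotProduct_smul, smul_eq_mul,
    dotProduct_comm w r]
  ring

end DotProduct

section OpNorm

variable {m d : ℕ} (A : Matrix (Fin m) (Fin d) ℝ)

lemma matrixOpNorm_eq_zero_iff : matrixOpNorm A = 0 ↔ A = 0 := by
  simp [matrixOpNorm]

lemma mulVec_dotProduct_mulVec_self_le (y : Fin d → ℝ) :
    (A *ᵥ y) ⬝ᵥ (A *ᵥ y) ≤ matrixOpNorm A ^ 2 * (y ⬝ᵥ y) := by
  have h := pow_le_pow_left₀ (norm_nonneg _)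
    ((LinearMap.toContinuousLinearMap (toEuclideanLin A)).le_opNorm (WithLp.toLp 2 y)) 2
  rw [mul_pow, EuclideanSpace.real_norm_sq_eq, EuclideanSpace.real_norm_sq_eq] at h
  simpa [matrixOpNorm, dotProduct, sq] using h

end OpNorm

section Moments

variable {Ω ι : Type*} [MeasurableSpace Ω] {μ : Measure Ω} {u X : Ω → ι → ℝ}
  {ψ : (ι → ℝ) → ℝ}

lemma ProbabilityTheory.IndepFun.apply_mul_apply (hind : IndepFun u X μ) (hψ : Measurable ψ)
    (i j : ι) :
    IndepFun (fun ω => u ω i * u ω j) (fun ω => X ω i * X ω j * ψ (X ω)) μ :=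
  hind.comp (φ := fun y : ι → ℝ => y i * y j)
    (ψ := fun y : ι → ℝ => y i * y j * ψ y) (by fun_prop) (by fun_prop)

variable [Fintype ι]

lemma integrable_mul_apply_of_integrable_dotProduct_self (hu : Measurable u)
    (hu2 : Integrable (fun ω => u ω ⬝ᵥ u ω) μ) (i j : ι) :
    Integrable (fun ω => u ω i * u ω j) μ := by
  refine hu2.mono (by fun_prop) (Filter.Eventually.of_forall fun ω => ?_)
  rw [Real.norm_eq_abs, Real.norm_eq_abs, abs_of_nonneg (real_dotProduct_self_nonneg _)]
  exact abs_mul_apply_le_dotProduct_self (u ω) i j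

lemma ProbabilityTheory.IndepFun.integrable_sq_dotProduct_mul (hind : IndepFun u X μ)
    (hu : Measurable u) (hu2 : Integrable (fun ω => u ω ⬝ᵥ u ω) μ) (hψ : Measurable ψ)
    (hXψ : ∀ i j, Integrable (fun ω => X ω i * X ω j * ψ (X ω)) μ) :
    Integrable (fun ω => (u ω ⬝ᵥ X ω) ^ 2 * ψ (X ω)) μ := by
  simp only [sq_dotProduct_mul_eq_sum]
  refine integrable_finsetSum _ fun i _ => integrable_finsetSum _ fun j _ => ?_
  exact (hind.apply_mul_apply hψ i j).integrable_mul
    (integrable_mul_apply_of_integrable_dotProduct_self hu hu2 i j) (hXψ i j)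

lemma ProbabilityTheory.IndepFun.integral_sq_dotProduct_mul [DecidableEq ι] {γ : ℝ}
    (hind : IndepFun u X μ) (hu : Measurable u) (hu2 : Integrable (fun ω => u ω ⬝ᵥ u ω) μ)
    (hψ : Measurable ψ) (hXψ : ∀ i j, Integrable (fun ω => X ω i * X ω j * ψ (X ω)) μ)
    (hmom : ∀ i j, ∫ ω, X ω i * X ω j * ψ (X ω) ∂μ = if i = j then γ else 0) :
    ∫ ω, (u ω ⬝ᵥ X ω) ^ 2 * ψ (X ω) ∂μ = γ * ∫ ω, u ω ⬝ᵥ u ω ∂μ := by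
  have huu := integrable_mul_apply_of_integrable_dotProduct_self hu hu2
  have hterm : ∀ i j,
      Integrable (fun ω => (u ω i * u ω j) * (X ω i * X ω j * ψ (X ω))) μ := fun i j =>
    (hind.apply_mul_apply hψ i j).integrable_mul (huu i j) (hXψ i j)
  simp only [sq_dotProduct_mul_eq_sum]
  calc ∫ ω, ∑ i, ∑ j, (u ω i * u ω j) * (X ω i * X ω j * ψ (X ω)) ∂μ
      = ∑ i, ∑ j, (∫ ω, u ω i * u ω j ∂μ) * ∫ ω, X ω i * X ω j * ψ (X ω) ∂μ := by
        rw [integral_finsetSum _ fun i _ => integrable_finsetSum _ fun j _ => hterm i j]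
        refine sum_congr rfl fun i _ => ?_
        rw [integral_finsetSum _ fun j _ => hterm i j]
        exact sum_congr rfl fun j _ => (hind.apply_mul_apply hψ i j).integral_mul_eq_mul_integral
          (huu i j).aestronglyMeasurable (hXψ i j).aestronglyMeasurable
    _ = γ * ∫ ω, u ω ⬝ᵥ u ω ∂μ := by
        simp only [hmom, mul_ite, mul_zero, sum_ite_eq, mem_univ, if_true, ← sum_mul]
        rw [mul_comm]
        simp only [dotProduct]
        rw [integral_finsetSum _ fun i _ => huu i i]

end Moments

section Recursion

variable {Ω β γ : Type*} [MeasurableSpace β] [MeasurableSpace γ]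
  {x : ℕ → Ω → β} {v : ℕ → Ω → γ} {F : γ → β → γ} {v₀ : γ}

lemma exists_measurable_eq_comp_of_recursion (hF : Measurable (Function.uncurry F))
    (hv0 : ∀ ω, v 0 ω = v₀) (hstep : ∀ k ω, v (k + 1) ω = F (v k ω) (x k ω)) (k : ℕ) :
    ∃ G : (range k → β) → γ, Measurable G ∧ ∀ ω, v k ω = G fun i => x i ω := by
  induction k with
  | zero => exact ⟨fun _ => v₀, measurable_const, hv0⟩
  | succ k ih =>
    obtain ⟨G, hG, hvG⟩ := ih
    let restrict (z : range (k + 1) → β) : range k → β :=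
      fun i => z ⟨i, range_subset_range.mpr (Nat.le_succ k) i.2⟩
    refine ⟨fun z => F (G (restrict z)) (z ⟨k, self_mem_range_succ k⟩), ?_, fun ω => ?_⟩
    · exact hF.comp ((hG.comp (by fun_prop)).prodMk (measurable_pi_apply _))
    · rw [hstep, hvG]

lemma measurable_of_recursion [MeasurableSpace Ω] (hx : ∀ k, Measurable (x k))
    (hF : Measurable (Function.uncurry F))
    (hv0 : ∀ ω, v 0 ω = v₀) (hstep : ∀ k ω, v (k + 1) ω = F (v k ω) (x k ω)) (k : ℕ) :
    Measurable (v k) := by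
  obtain ⟨G, hG, hvG⟩ := exists_measurable_eq_comp_of_recursion hF hv0 hstep k
  rw [funext hvG]
  exact hG.comp (measurable_pi_lambda _ fun i => hx i)

lemma ProbabilityTheory.iIndepFun.indepFun_of_recursion [MeasurableSpace Ω] {μ : Measure Ω}
    (hind : iIndepFun x μ)
    (hx : ∀ k, Measurable (x k)) (hF : Measurable (Function.uncurry F))
    (hv0 : ∀ ω, v 0 ω = v₀) (hstep : ∀ k ω, v (k + 1) ω = F (v k ω) (x k ω)) (k : ℕ) :
    IndepFun (v k) (x k) μ := by
  obtain ⟨G, hG, hvG⟩ := exists_measurable_eq_comp_of_recursion hF hv0 hstep k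
  have hdisj : Disjoint (range k) {k} := by simp
  rw [funext hvG]
  exact (hind.indepFun_finset _ _ hdisj hx).comp hG
    (measurable_pi_apply ⟨k, mem_singleton_self k⟩)

end Recursion

lemma exists_lt_le_div_of_descent {R G : ℕ → ℝ} {τ : ℝ} (hτ : 0 < τ) (hR : ∀ k, 0 ≤ R k)
    (hdesc : ∀ k, R (k + 1) ≤ R k - τ * G k) {N : ℕ} (hN : 0 < N) :
    ∃ k < N, G k ≤ R 0 / (τ * N) := by
  have htel : ∀ n, τ * ∑ k ∈ range n, G k ≤ R 0 - R n := by
    intro n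
    induction n with
    | zero => simp
    | succ n ih => rw [sum_range_succ, mul_add]; linarith [hdesc n]
  have hsum : ∑ k ∈ range N, G k ≤ ∑ _k ∈ range N, R 0 / (τ * N) := by
    have hconst : (N : ℝ) * (R 0 / (τ * N)) = R 0 / τ := by field_simp
    rw [sum_const, card_range, nsmul_eq_mul, hconst, le_div_iff₀' hτ]
    linarith [htel N, hR N]
  obtain ⟨k, hk, hGk⟩ := exists_le_of_sum_le (nonempty_range_iff.mpr hN.ne') hsum
  exact ⟨k, mem_range.mp hk, hGk⟩

section Step

variable {m d : ℕ} (A : Matrix (Fin m) (Fin d) ℝ) (b : Fin m → ℝ) (τ : ℝ)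

def sgdasStep (v x : Fin d → ℝ) : Fin d → ℝ :=
  v - τ • (((A *ᵥ v - b) ⬝ᵥ A *ᵥ x) • x)

lemma measurable_uncurry_sgdasStep : Measurable (Function.uncurry (sgdasStep A b τ)) := by
  unfold sgdasStep Function.uncurry
  fun_prop

lemma residual_sgdasStep (v x : Fin d → ℝ) :
    A *ᵥ sgdasStep A b τ v x - b
      = (A *ᵥ v - b) - (τ * ((Aᵀ *ᵥ (A *ᵥ v - b)) ⬝ᵥ x)) • (A *ᵥ x) := by
  rw [sgdasStep, mulVec_sub, mulVec_smul, mulVec_smul, smul_smul, sub_right_comm,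
    dotProduct_mulVec, mulVec_transpose]

lemma residual_sgdasStep_le (v x : Fin d → ℝ) :
    (A *ᵥ sgdasStep A b τ v x - b) ⬝ᵥ (A *ᵥ sgdasStep A b τ v x - b)
      ≤ (A *ᵥ v - b) ⬝ᵥ (A *ᵥ v - b) - 2 * τ * ((Aᵀ *ᵥ (A *ᵥ v - b)) ⬝ᵥ x) ^ 2
        + τ ^ 2 * matrixOpNorm A ^ 2 * (((Aᵀ *ᵥ (A *ᵥ v - b)) ⬝ᵥ x) ^ 2 * (x ⬝ᵥ x)) := by
  have hs : (A *ᵥ v - b) ⬝ᵥ (A *ᵥ x) = (Aᵀ *ᵥ (A *ᵥ v - b)) ⬝ᵥ x := by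
    rw [dotProduct_mulVec, mulVec_transpose]
  rw [residual_sgdasStep, dotProduct_self_sub_smul, hs]
  have hAx := mul_le_mul_of_nonneg_left (mulVec_dotProduct_mulVec_self_le A x)
    (mul_nonneg (sq_nonneg τ) (sq_nonneg ((Aᵀ *ᵥ (A *ᵥ v - b)) ⬝ᵥ x)))
  linear_combination hAx

lemma integral_residual_sgdasStep_le {Ω : Type*} [MeasurableSpace Ω] {μ : Measure Ω}
    {V V' X : Ω → Fin d → ℝ} {c : ℝ} (hV : Measurable V) (hind : IndepFun V X μ)
    (hX2 : ∀ i j, Integrable (fun ω => X ω i * X ω j) μ)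
    (hX4 : ∀ i j, Integrable (fun ω => X ω i * X ω j * (X ω ⬝ᵥ X ω)) μ)
    (hiso : ∀ i j, ∫ ω, X ω i * X ω j ∂μ = if i = j then (1 : ℝ) else 0)
    (h4 : ∀ i j, ∫ ω, X ω i * X ω j * (X ω ⬝ᵥ X ω) ∂μ = if i = j then c else 0)
    (hV' : ∀ ω, V' ω = sgdasStep A b τ (V ω) (X ω))
    (hR : Integrable (fun ω => (A *ᵥ V ω - b) ⬝ᵥ (A *ᵥ V ω - b)) μ)
    (hR' : Integrable (fun ω => (A *ᵥ V' ω - b) ⬝ᵥ (A *ᵥ V' ω - b)) μ)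
    (hN : Integrable (fun ω => (Aᵀ *ᵥ (A *ᵥ V ω - b)) ⬝ᵥ (Aᵀ *ᵥ (A *ᵥ V ω - b))) μ) :
    ∫ ω, (A *ᵥ V' ω - b) ⬝ᵥ (A *ᵥ V' ω - b) ∂μ
      ≤ ∫ ω, (A *ᵥ V ω - b) ⬝ᵥ (A *ᵥ V ω - b) ∂μ
        - (2 * τ - τ ^ 2 * matrixOpNorm A ^ 2 * c)
          * ∫ ω, (Aᵀ *ᵥ (A *ᵥ V ω - b)) ⬝ᵥ (Aᵀ *ᵥ (A *ᵥ V ω - b)) ∂μ := by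
  set U := fun ω => Aᵀ *ᵥ (A *ᵥ V ω - b)
  have hU : Measurable U := by fun_prop
  have hindU : IndepFun U X μ :=
    hind.comp (φ := fun v => Aᵀ *ᵥ (A *ᵥ v - b)) (by fun_prop) measurable_id
  have hX2' : ∀ i j, Integrable (fun ω => X ω i * X ω j * (fun _ => (1 : ℝ)) (X ω)) μ := by
    simpa using hX2
  have h2 := hindU.integral_sq_dotProduct_mul hU hN measurable_const hX2' (by simpa using hiso)
  have h2int := hindU.integrable_sq_dotProduct_mul hU hN measurable_const hX2'
  have hψ : Measurable fun y : Fin d → ℝ => y ⬝ᵥ y := by fun_prop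
  have h4' := hindU.integral_sq_dotProduct_mul hU hN hψ hX4 h4
  have h4int := (hindU.integrable_sq_dotProduct_mul hU hN hψ hX4).const_mul
    (τ ^ 2 * matrixOpNorm A ^ 2)
  simp only [mul_one, one_mul] at h2 h2int
  have hdiff : Integrable
      (fun ω => (A *ᵥ V ω - b) ⬝ᵥ (A *ᵥ V ω - b) - 2 * τ * (U ω ⬝ᵥ X ω) ^ 2) μ :=
    hR.sub (h2int.const_mul _)
  calc ∫ ω, (A *ᵥ V' ω - b) ⬝ᵥ (A *ᵥ V' ω - b) ∂μ
      ≤ ∫ ω, (A *ᵥ V ω - b) ⬝ᵥ (A *ᵥ V ω - b) - 2 * τ * (U ω ⬝ᵥ X ω) ^ 2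
          + τ ^ 2 * matrixOpNorm A ^ 2 * ((U ω ⬝ᵥ X ω) ^ 2 * (X ω ⬝ᵥ X ω)) ∂μ :=
        integral_mono hR' (hdiff.add h4int) fun ω => by
          simpa only [hV'] using residual_sgdasStep_le A b τ (V ω) (X ω)
    _ = _ := by
        rw [integral_add hdiff h4int, integral_sub hR (h2int.const_mul _),
          integral_const_mul, integral_const_mul, h2, h4']
        ring

end Step

/-- SGDAS with `v^0 = 0`, constant step `τ = 1/(c‖A‖²)` and i.i.d. isotropic
directions with `E(xxᵀ‖x‖²) = cI` satisfies
`min_{0 ≤ k ≤ N−1} E(‖Aᵀ(Av^k − b)‖²) ≤ c‖A‖²‖b‖²/N`. -/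
theorem sgdas_sublinear_normal_equation_residual
    {d m : ℕ} {Ω : Type*} [MeasurableSpace Ω] (μ : Measure Ω) [IsProbabilityMeasure μ]
    (A : Matrix (Fin m) (Fin d) ℝ) (b : Fin m → ℝ) (c : ℝ) (hc : 0 < c)
    (x : ℕ → Ω → Fin d → ℝ)
    (hxmeas : ∀ k, Measurable (x k))
    (hindep : iIndepFun x μ)
    (hint2 : ∀ k i j, Integrable (fun ω => x k ω i * x k ω j) μ)
    (hint4 : ∀ k i j, Integrable (fun ω => x k ω i * x k ω j * (x k ω ⬝ᵥ x k ω)) μ)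
    (hiso : ∀ k i j, ∫ ω, x k ω i * x k ω j ∂μ = if i = j then (1 : ℝ) else 0)
    (h4 : ∀ k i j, ∫ ω, x k ω i * x k ω j * (x k ω ⬝ᵥ x k ω) ∂μ = if i = j then c else 0)
    (τ : ℝ) (hτ : τ = 1 / (c * matrixOpNorm A ^ 2))
    (v : ℕ → Ω → Fin d → ℝ)
    (hv0 : ∀ ω, v 0 ω = 0)
    (hstep : ∀ k ω, v (k + 1) ω
        = v k ω - τ • (((A.mulVec (v k ω) - b) ⬝ᵥ A.mulVec (x k ω)) • x k ω))
    (hintR : ∀ k, Integrable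
        (fun ω => (A.mulVec (v k ω) - b) ⬝ᵥ (A.mulVec (v k ω) - b)) μ)
    (hintN : ∀ k, Integrable
        (fun ω => (Aᵀ.mulVec (A.mulVec (v k ω) - b)) ⬝ᵥ (Aᵀ.mulVec (A.mulVec (v k ω) - b))) μ)
    (N : ℕ) (hN : 0 < N) :
    ∃ k < N, ∫ ω, (Aᵀ.mulVec (A.mulVec (v k ω) - b)) ⬝ᵥ
          (Aᵀ.mulVec (A.mulVec (v k ω) - b)) ∂μ
        ≤ c * matrixOpNorm A ^ 2 * (b ⬝ᵥ b) / N := by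
  obtain rfl | hA := eq_or_ne A 0
  · exact ⟨0, hN, by simp [matrixOpNorm]⟩
  have hL : 0 < matrixOpNorm A ^ 2 := by
    have := (matrixOpNorm_eq_zero_iff A).not.mpr hA
    positivity
  have hτ_pos : 0 < τ := by rw [hτ]; positivity
  have hτ_rate : 2 * τ - τ ^ 2 * matrixOpNorm A ^ 2 * c = τ := by rw [hτ]; field_simp; ring
  have hstep' : ∀ k ω, v (k + 1) ω = sgdasStep A b τ (v k ω) (x k ω) := hstep
  have hF := measurable_uncurry_sgdasStep A b τ
  have hdesc := fun k => integral_residual_sgdasStep_le A b τ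
    (measurable_of_recursion hxmeas hF hv0 hstep' k)
    (hindep.indepFun_of_recursion hxmeas hF hv0 hstep' k)
    (hint2 k) (hint4 k) (hiso k) (h4 k) (hstep' k) (hintR k) (hintR (k + 1)) (hintN k)
  simp only [hτ_rate] at hdesc
  obtain ⟨k, hk, hle⟩ := exists_lt_le_div_of_descent
    (R := fun k => ∫ ω, (A *ᵥ v k ω - b) ⬝ᵥ (A *ᵥ v k ω - b) ∂μ) hτ_pos
    (fun k => integral_nonneg fun ω => real_dotProduct_self_nonneg _) hdesc hN
  refine ⟨k, hk, hle.trans_eq ?_⟩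
  simp only [hv0, mulVec_zero, zero_sub, neg_dotProduct_neg, integral_const, probReal_univ,
    one_smul, hτ]
  field_simp
end
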